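/- arXiv:2204.10968 — 7 statements merged into one kernel-verified Lean document; each statement's English description precedes it below -/
import Mathlib

section
/- For every t ≥ 1 there exists a finite multigraph-free construction: a finite graph G_t together with an edge-coloring φ_t : E(G_t) → {1,…,t} such that (a) for each color i, the subgraph of G_t consisting of edges colored i is a star forest, and (b) there is no vertex coloring σ : V(G_t) → {1,…,t} with the property that no edge e = uv satisfies φ_t(e) = σ(u) = σ(v). -/
/-- A graph is a star forest if it is acyclic and each connected component contains at most
one vertex of degree greater than 1 (having two distinct neighbors). -/
def IsStarForest {V : Type*} (G : SimpleGraph V) : Prop :=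
  G.IsAcyclic ∧ ∀ u v : V, G.Reachable u v →
    (∃ a b, a ≠ b ∧ G.Adj u a ∧ G.Adj u b) →
    (∃ a b, a ≠ b ∧ G.Adj v a ∧ G.Adj v b) → u = v

/-- The subgraph of `G` consisting of the edges colored `i` by the edge-coloring `φ`. -/
def colorSubgraph {V : Type*} {t : ℕ} (G : SimpleGraph V) (φ : Sym2 V → Fin t) (i : Fin t) :
    SimpleGraph V where
  Adj u v := G.Adj u v ∧ φ s(u, v) = i
  symm := by
    constructor
    intro u v h
    exact ⟨h.1.symm, by rw [Sym2.eq_swap]; exact h.2⟩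
  loopless := by
    constructor
    intro v h
    exact G.irrefl h.1

/-- A center structure: every edge joins a vertex to the common "center" of its endpoints. -/
def HasCenter {V : Type*} (G : SimpleGraph V) : Prop :=
  ∃ c : V → V, ∀ u v, G.Adj u v → (c u = u ∧ c v = u) ∨ (c u = v ∧ c v = v)

lemma hasCenter_isStarForest {V : Type*} {G : SimpleGraph V} (h : HasCenter G) :
    IsStarForest G := by
  obtain ⟨c, hc⟩ := h
  have hconst : ∀ u v, G.Adj u v → c u = c v := by
    intro u v huv
    rcases hc u v huv with ⟨h1, h2⟩ | ⟨h1, h2⟩ <;> rw [h1, h2]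
  have hreach : ∀ u v, G.Reachable u v → c u = c v := by
    intro u v huv
    obtain ⟨p⟩ := huv
    induction p with
    | nil => rfl
    | cons h q ih => exact (hconst _ _ h).trans ih
  constructor
  · intro v p hp
    have hlen := hp.three_le_length
    cases p with
    | nil => simp at hlen
    | cons h1 q =>
      rename_i u1
      cases q with
      | nil => simp at hlen
      | cons h2 r =>
        rename_i u2
        cases r with
        | nil => simp at hlen
        | cons h3 s =>
          rename_i u3
          -- h1 : G.Adj v u1, h2 : G.Adj u1 u2, h3 : G.Adj u2 u3, s : Walk u3 v
          have hnd := hp.support_nodup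
          simp only [SimpleGraph.Walk.support_cons, List.tail_cons, List.nodup_cons] at hnd
          have hu13 : u1 ≠ u3 := by
            intro h
            apply hnd.1
            rw [h]
            exact List.mem_cons_of_mem _ s.start_mem_support
          have hu2v : u2 ≠ v := by
            intro h
            apply hnd.2.1
            rw [h]
            exact s.end_mem_support
          rcases hc _ _ h2 with ⟨hA1, hA2⟩ | ⟨hB1, hB2⟩
          · -- c u1 = u1, c u2 = u1
            rcases hc _ _ h3 with ⟨hC1, _⟩ | ⟨hC1, _⟩
            · exact h2.ne (hA2.symm.trans hC1)
            · exact hu13 (hA2.symm.trans hC1)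
          · -- c u1 = u2, c u2 = u2
            rcases hc _ _ h1 with ⟨_, hD⟩ | ⟨_, hD⟩
            · exact hu2v (hB1.symm.trans hD)
            · exact h2.ne (hB1.symm.trans hD).symm
  · rintro u v hr ⟨a, b, hab, hua, hub⟩ ⟨a', b', hab', hva, hvb⟩
    have hu : c u = u := by
      rcases hc u a hua with ⟨h1, _⟩ | ⟨h1, _⟩
      · exact h1
      rcases hc u b hub with ⟨h2, _⟩ | ⟨h2, _⟩
      · exact h2
      · exact absurd (h1.symm.trans h2) hab
    have hv : c v = v := by
      rcases hc v a' hva with ⟨h1, _⟩ | ⟨h1, _⟩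
      · exact h1
      rcases hc v b' hvb with ⟨h2, _⟩ | ⟨h2, _⟩
      · exact h2
      · exact absurd (h1.symm.trans h2) hab'
    exact hu.symm.trans ((hreach u v hr).trans hv)

section Step

variable {n : ℕ} {V : Type}

/-- Vertex type of the step construction. -/
abbrev StepV (n : ℕ) (V : Type) : Type := (Fin (n + 2) → V) ⊕ (Fin (n + 2) × V)

def stepAdj (G : SimpleGraph V) : StepV n V → StepV n V → Prop
  | .inl _, .inl _ => False
  | .inl f, .inr p => f p.1 = p.2
  | .inr p, .inl f => f p.1 = p.2
  | .inr p, .inr q => p.1 = q.1 ∧ G.Adj p.2 q.2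

def stepGraph (G : SimpleGraph V) : SimpleGraph (StepV n V) where
  Adj := stepAdj G
  symm := by
    constructor
    rintro (f | ⟨c, x⟩) (g | ⟨c', x'⟩) h
    · exact h
    · exact h
    · exact h
    · obtain ⟨h1, h2⟩ := h
      exact ⟨h1.symm, by rw [show c = c' from h1] at h2 ⊢; exact h2.symm⟩
  loopless := by
    constructor
    rintro (f | ⟨c, x⟩) h
    · exact h
    · exact G.irrefl h.2

def stepFun (φ : Sym2 V → Fin (n + 1)) : StepV n V → StepV n V → Fin (n + 2)
  | .inl _, .inl _ => 0
  | .inl _, .inr p => p.1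
  | .inr p, .inl _ => p.1
  | .inr p, .inr q => if p.1 = q.1 then p.1.succAbove (φ s(p.2, q.2)) else 0

lemma stepFun_symm (φ : Sym2 V → Fin (n + 1)) :
    ∀ u v, stepFun φ u v = stepFun φ v u := by
  rintro (f | ⟨c, x⟩) (g | ⟨c', x'⟩) <;> simp only [stepFun]
  by_cases h : c = c'
  · subst h
    simp [Sym2.eq_swap]
  · rw [if_neg h, if_neg (Ne.symm h)]

def stepφ (φ : Sym2 V → Fin (n + 1)) : Sym2 (StepV n V) → Fin (n + 2) :=
  Sym2.lift ⟨stepFun φ, stepFun_symm φ⟩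

@[simp] lemma stepφ_mk (φ : Sym2 V → Fin (n + 1)) (u v : StepV n V) :
    stepφ φ s(u, v) = stepFun φ u v := rfl

end Step

lemma aux_construction : ∀ n : ℕ,
    ∃ (V : Type) (_ : Fintype V) (G : SimpleGraph V) (φ : Sym2 V → Fin (n + 1)),
      (∀ i : Fin (n + 1), HasCenter (colorSubgraph G φ i)) ∧
      ¬ ∃ σ : V → Fin (n + 1), ∀ u v : V, G.Adj u v → ¬ (φ s(u, v) = σ u ∧ σ u = σ v) := by
  intro n
  induction n with
  | zero =>
    refine ⟨Fin 2, inferInstance, ⊤, fun _ => 0, ?_, ?_⟩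
    · intro i
      refine ⟨fun _ => 0, ?_⟩
      intro u v huv
      have hne : u ≠ v := huv.1.ne
      fin_cases u <;> fin_cases v <;> simp_all
    · rintro ⟨σ, hσ⟩
      refine hσ 0 1 (by decide) ⟨?_, ?_⟩
      · exact Subsingleton.elim (α := Fin 1) _ _
      · exact Subsingleton.elim (α := Fin 1) _ _
  | succ n ih =>
    obtain ⟨V, fV, G, φ, hc, hn⟩ := ih
    have hc' : ∀ j : Fin (n + 1), ∃ c : V → V, ∀ u v,
        (colorSubgraph G φ j).Adj u v → (c u = u ∧ c v = u) ∨ (c u = v ∧ c v = v) := hc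
    choose cc hcc using hc'
    refine ⟨StepV n V, inferInstance, stepGraph G, stepφ φ, ?_, ?_⟩
    · -- centers for each color i
      intro i
      classical
      refine ⟨fun u => match u with
        | .inl f => .inr (i, f i)
        | .inr p => if h : p.1 = i then .inr p
            else .inr (p.1, cc (Classical.choose (Fin.exists_succAbove_eq
              (show i ≠ p.1 from Ne.symm h))) p.2), ?_⟩
      rintro (f | ⟨c, x⟩) (g | ⟨c', x'⟩) ⟨hadj, hcol⟩
      · exact hadj.elim
      · -- inl f — inr (c', x')
        simp only [stepφ_mk, stepFun] at hcol
        subst hcol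
        have hx : f c' = x' := hadj
        right
        refine ⟨?_, ?_⟩
        · show Sum.inr (c', f c') = Sum.inr (c', x')
          rw [hx]
        · show (if h : c' = c' then (Sum.inr (c', x') : StepV n V) else _) = Sum.inr (c', x')
          rw [dif_pos rfl]
      · -- inr (c, x) — inl g
        simp only [stepφ_mk, stepFun] at hcol
        subst hcol
        have hx : g c = x := hadj
        left
        refine ⟨?_, ?_⟩
        · show (if h : c = c then (Sum.inr (c, x) : StepV n V) else _) = Sum.inr (c, x)
          rw [dif_pos rfl]
        · show Sum.inr (c, g c) = Sum.inr (c, x)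
          rw [hx]
      · -- inr (c,x) — inr (c',x')
        have hcc' : c = c' := hadj.1
        subst hcc'
        have hG : G.Adj x x' := hadj.2
        simp only [stepφ_mk, stepFun, if_pos rfl] at hcol
        have hne : ¬ c = i := fun h => Fin.succAbove_ne c (φ s(x, x')) (hcol.trans h.symm)
        have hspec := Classical.choose_spec (Fin.exists_succAbove_eq
          (show i ≠ c from Ne.symm hne))
        have hφj : φ s(x, x') = Classical.choose (Fin.exists_succAbove_eq
            (show i ≠ c from Ne.symm hne)) :=
          Fin.succAbove_right_injective (hcol.trans hspec.symm)
        set j := Classical.choose (Fin.exists_succAbove_eq (show i ≠ c from Ne.symm hne))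
          with hj
        have hadj' : (colorSubgraph G φ j).Adj x x' := ⟨hG, hφj⟩
        rcases hcc j x x' hadj' with ⟨h1, h2⟩ | ⟨h1, h2⟩
        · left
          refine ⟨?_, ?_⟩
          · show (if h : c = i then (Sum.inr (c, x) : StepV n V) else
                Sum.inr (c, cc (Classical.choose (Fin.exists_succAbove_eq
                  (show i ≠ c from Ne.symm h))) x)) = Sum.inr (c, x)
            rw [dif_neg hne]
            exact congrArg _ (congrArg _ h1)
          · show (if h : c = i then (Sum.inr (c, x') : StepV n V) else
                Sum.inr (c, cc (Classical.choose (Fin.exists_succAbove_eq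
                  (show i ≠ c from Ne.symm h))) x')) = Sum.inr (c, x)
            rw [dif_neg hne]
            exact congrArg _ (congrArg _ h2)
        · right
          refine ⟨?_, ?_⟩
          · show (if h : c = i then (Sum.inr (c, x) : StepV n V) else
                Sum.inr (c, cc (Classical.choose (Fin.exists_succAbove_eq
                  (show i ≠ c from Ne.symm h))) x)) = Sum.inr (c, x')
            rw [dif_neg hne]
            exact congrArg _ (congrArg _ h1)
          · show (if h : c = i then (Sum.inr (c, x') : StepV n V) else
                Sum.inr (c, cc (Classical.choose (Fin.exists_succAbove_eq
                  (show i ≠ c from Ne.symm h))) x')) = Sum.inr (c, x')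
            rw [dif_neg hne]
            exact congrArg _ (congrArg _ h2)
    · -- no adapted coloring
      rintro ⟨σ, hσ⟩
      have step1 : ∀ c : Fin (n + 2), ∃ x : V, σ (.inr (c, x)) = c := by
        intro c
        by_contra hno
        push_neg at hno
        classical
        have hτ : ∀ x : V, ∃ j : Fin (n + 1), c.succAbove j = σ (.inr (c, x)) :=
          fun x => Fin.exists_succAbove_eq (hno x)
        choose τ hτs using hτ
        apply hn
        refine ⟨τ, ?_⟩
        rintro u v huv ⟨hp1, hp2⟩
        have hadj' : (stepGraph G).Adj (Sum.inr (c, u)) (Sum.inr (c, v)) := ⟨rfl, huv⟩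
        refine hσ (Sum.inr (c, u)) (Sum.inr (c, v)) hadj' ⟨?_, ?_⟩
        · show (if c = c then c.succAbove (φ s(u, v)) else 0) = σ (Sum.inr (c, u))
          rw [if_pos rfl, hp1, hτs u]
        · rw [← hτs u, ← hτs v, hp2]
      choose f hf using step1
      have hadj' : (stepGraph G).Adj (Sum.inl f) (Sum.inr (σ (Sum.inl f), f (σ (Sum.inl f)))) :=
        rfl
      refine hσ _ _ hadj' ⟨rfl, (hf (σ (Sum.inl f))).symm⟩

theorem stmt2 : ∀ t : ℕ, 1 ≤ t →
    ∃ (V : Type) (_ : Fintype V) (G : SimpleGraph V) (φ : Sym2 V → Fin t),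
      (∀ i : Fin t, IsStarForest (colorSubgraph G φ i)) ∧
      ¬ ∃ σ : V → Fin t, ∀ u v : V, G.Adj u v → ¬ (φ s(u, v) = σ u ∧ σ u = σ v) := by
  intro t ht
  obtain ⟨n, rfl⟩ : ∃ n, t = n + 1 := ⟨t - 1, (Nat.succ_pred_eq_of_pos ht).symm⟩
  obtain ⟨V, fV, G, φ, hc, hn⟩ := aux_construction n
  exact ⟨V, fV, G, φ, fun i => hasCenter_isStarForest (hc i), hn⟩
end

section
/- For every t ≥ 1 there exists a family G_1, …, G_t of star forests on a common vertex set V such that each G_i has maximum degree at most 3·(t-1)! and the family admits no cooperative coloring, i.e., there do not exist independent sets R_i ⊆ V of G_i (for 1 ≤ i ≤ t) with R_1 ∪ … ∪ R_t = V. -/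
/-!
The vertices are the duplicate-free sequences of colours, and `G_i` joins every sequence
containing `i` to its prefix before `i`. This is a star forest whose centres are the sequences
avoiding `i`; the leaves of a centre `σ` are the sequences `σ ++ i :: r`, so there are at most
`∑ₖ (t-1)!/k! < 3 (t-1)!` of them.

Given a cooperative colouring `R`, grow a sequence `σ` from the empty one, keeping the invariant
that for every entry `i` of `σ` the prefix of `σ` before `i` lies in `R i`: append a colour `m`
with `σ ∈ R m`. Then `m` does not occur in `σ`, as otherwise `σ` and its prefix before `m` would
be adjacent in `G_m` and both lie in `R m`. This gives duplicate-free sequences of every length.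
-/

open SimpleGraph

section StarGraph

variable {V : Type*}

def starGraph (IsLeaf : V → Prop) (center : V → V) : SimpleGraph V :=
  SimpleGraph.fromRel fun v w => IsLeaf v ∧ w = center v

variable {IsLeaf : V → Prop} {center : V → V}
  (hcenter : ∀ v, IsLeaf v → ¬ IsLeaf (center v))
include hcenter

lemma starGraph_adj {v w : V} :
    (starGraph IsLeaf center).Adj v w ↔ IsLeaf v ∧ w = center v ∨ IsLeaf w ∧ v = center w := by
  refine ⟨And.right, fun h => ⟨?_, h⟩⟩
  rintro rfl
  rcases h with ⟨hv, hc⟩ | ⟨hv, hc⟩ <;> exact hcenter v hv (hc ▸ hv)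

lemma starGraph_adj_of_isLeaf {v w : V} (hv : IsLeaf v) :
    (starGraph IsLeaf center).Adj v w ↔ w = center v := by
  rw [starGraph_adj hcenter]
  refine ⟨?_, fun h => .inl ⟨hv, h⟩⟩
  rintro (⟨-, h⟩ | ⟨hw, rfl⟩)
  · exact h
  · exact absurd hv (hcenter w hw)

lemma starGraph_adj_of_not_isLeaf {v w : V} (hv : ¬ IsLeaf v) :
    (starGraph IsLeaf center).Adj v w ↔ IsLeaf w ∧ center w = v := by
  rw [starGraph_adj hcenter]
  grind

lemma isAcyclic_starGraph : (starGraph IsLeaf center).IsAcyclic := by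
  refine isAcyclic_iff_forall_adj_isBridge.mpr fun v w hvw => ?_
  wlog hv : IsLeaf v generalizing v w
  · rw [Sym2.eq_swap]
    exact this w v hvw.symm (((starGraph_adj_of_not_isLeaf hcenter hv).mp hvw).1)
  -- deleting `s(v, w)` isolates the leaf `v`
  rw [isBridge_iff]
  rintro ⟨_ | ⟨hadj, -⟩⟩
  · exact hvw.ne rfl
  · obtain rfl := (starGraph_adj_of_isLeaf hcenter hv).mp hvw
    rw [deleteEdges_adj, starGraph_adj_of_isLeaf hcenter hv] at hadj
    exact hadj.2 (by rw [hadj.1]; rfl)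

lemma starGraph_eq_of_reachable {u v : V} (hu : ¬ IsLeaf u) (hv : ¬ IsLeaf v)
    (huv : (starGraph IsLeaf center).Reachable u v) : u = v := by
  classical
  let root w := if IsLeaf w then center w else w
  have hroot : ∀ a b, (starGraph IsLeaf center).Adj a b → root a = root b := by
    intro a b hab
    rcases (starGraph_adj hcenter).mp hab with ⟨ha, rfl⟩ | ⟨hb, rfl⟩
    · simp [root, ha, hcenter a ha]
    · simp [root, hb, hcenter b hb]
  have hconst {w : V} (h : Relation.ReflTransGen (starGraph IsLeaf center).Adj u w) :
      root u = root w := by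
    induction h with
    | refl => rfl
    | tail _ hbc ih => exact ih.trans (hroot _ _ hbc)
  simpa [root, hu, hv] using hconst ((reachable_iff_reflTransGen u v).mp huv)

lemma isStarForest_starGraph : IsStarForest (starGraph IsLeaf center) := by
  refine ⟨isAcyclic_starGraph hcenter, fun u v huv ⟨a, b, hab, hua, hub⟩ ⟨c, d, hcd, hvc, hvd⟩ =>
    starGraph_eq_of_reachable hcenter ?_ ?_ huv⟩
  · intro hu
    rw [starGraph_adj_of_isLeaf hcenter hu] at hua hub
    exact hab (hua.trans hub.symm)
  · intro hv
    rw [starGraph_adj_of_isLeaf hcenter hv] at hvc hvd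
    exact hcd (hvc.trans hvd.symm)

lemma ncard_neighborSet_starGraph_of_isLeaf {v : V} (hv : IsLeaf v) :
    {w | (starGraph IsLeaf center).Adj v w}.ncard = 1 := by
  simp [starGraph_adj_of_isLeaf hcenter hv]

end StarGraph

namespace List
variable {α : Type*} [DecidableEq α] {i : α}

lemma notMem_takeWhile_ne (l : List α) : i ∉ l.takeWhile (· ≠ i) := by
  intro h
  simpa using mem_takeWhile_imp h

lemma takeWhile_ne_append_cons {s : List α} (hs : i ∉ s) (r : List α) :
    (s ++ i :: r).takeWhile (· ≠ i) = s := by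
  rw [takeWhile_append_of_pos (by grind)]
  simp

lemma takeWhile_ne_append_of_mem {s : List α} (hs : i ∈ s) (r : List α) :
    (s ++ r).takeWhile (· ≠ i) = s.takeWhile (· ≠ i) := by
  induction s with
  | nil => simp at hs
  | cons a s ih =>
    by_cases ha : a = i
    · simp [ha]
    · rw [cons_append, takeWhile_cons_of_pos (by simpa using ha),
        takeWhile_cons_of_pos (by simpa using ha), ih (by simpa [Ne.symm ha] using hs)]

lemma exists_eq_takeWhile_ne_append_cons {l : List α} (hl : i ∈ l) :
    ∃ r, l = l.takeWhile (· ≠ i) ++ i :: r := by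
  induction l with
  | nil => simp at hl
  | cons a l ih =>
    by_cases ha : a = i
    · exact ⟨l, by simp [ha]⟩
    · obtain ⟨r, hr⟩ := ih (by simpa [Ne.symm ha] using hl)
      exact ⟨r, by rw [takeWhile_cons_of_pos (by simpa using ha), cons_append, ← hr]⟩

end List

open Finset Nat

abbrev NodupList (α : Type*) := {l : List α // l.Nodup}

lemma sum_descFactorial_lt (s : ℕ) : ∑ k ∈ range (s + 1), s.descFactorial k < 3 * s ! := by
  induction s with
  | zero => simp
  | succ s ih =>
    rw [sum_range_succ', Nat.descFactorial_zero]
    simp only [Nat.succ_descFactorial_succ, ← mul_sum, Nat.factorial_succ]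
    rcases s with _ | s
    · simp
    · nlinarith

lemma card_nodupList_lt (β : Type*) [Fintype β] :
    Nat.card (NodupList β) < 3 * (Fintype.card β)! := by
  classical
  set s := Fintype.card β
  let ofEmbedding (p : Σ k : Fin (s + 1), Fin k ↪ β) : NodupList β :=
    ⟨List.ofFn p.2, List.nodup_ofFn.mpr p.2.injective⟩
  have hsurj : Function.Surjective ofEmbedding := by
    rintro ⟨l, hl⟩
    exact ⟨⟨⟨l.length, Nat.lt_succ_of_le hl.length_le_card⟩,
      ⟨l.get, List.nodup_iff_injective_get.mp hl⟩⟩, Subtype.ext (List.ofFn_get l)⟩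
  calc Nat.card (NodupList β)
      ≤ Nat.card (Σ k : Fin (s + 1), Fin k ↪ β) := Nat.card_le_card_of_surjective _ hsurj
    _ = ∑ k ∈ range (s + 1), s.descFactorial k := by
      simp [Nat.card_eq_fintype_card, Fintype.card_sigma, Fintype.card_embedding_eq,
        ← Fin.sum_univ_eq_sum_range, s]
    _ < 3 * s ! := sum_descFactorial_lt s

namespace NodupList

variable {α : Type*} [DecidableEq α]

def prefixBefore (i : α) (σ : NodupList α) : NodupList α :=
  ⟨σ.1.takeWhile (· ≠ i), σ.2.sublist (List.takeWhile_sublist _)⟩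

def prefixGraph (i : α) : SimpleGraph (NodupList α) :=
  starGraph (fun σ => i ∈ σ.1) (prefixBefore i)

lemma notMem_prefixBefore (i : α) (σ : NodupList α) : i ∉ (prefixBefore i σ).1 :=
  List.notMem_takeWhile_ne σ.1

lemma isStarForest_prefixGraph (i : α) : IsStarForest (prefixGraph i) :=
  isStarForest_starGraph fun σ _ => notMem_prefixBefore i σ

lemma prefixGraph_adj_of_notMem {i : α} {σ τ : NodupList α} (hσ : i ∉ σ.1) :
    (prefixGraph i).Adj σ τ ↔ i ∈ τ.1 ∧ prefixBefore i τ = σ :=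
  starGraph_adj_of_not_isLeaf (fun σ _ => notMem_prefixBefore i σ) hσ

lemma prefixGraph_adj_prefixBefore {i : α} {σ : NodupList α} (hσ : i ∈ σ.1) :
    (prefixGraph i).Adj σ (prefixBefore i σ) :=
  (starGraph_adj_of_isLeaf (fun σ _ => notMem_prefixBefore i σ) hσ).mpr rfl

lemma ncard_neighborSet_prefixGraph_le_of_notMem [Fintype α] {i : α} {σ : NodupList α}
    (hσ : i ∉ σ.1) :
    {τ | (prefixGraph i).Adj σ τ}.ncard ≤ Nat.card (NodupList {x // x ≠ i}) := by
  let extend (r : NodupList {x // x ≠ i}) : List α := σ.1 ++ i :: r.1.map Subtype.val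
  have hsub : Subtype.val '' {τ | (prefixGraph i).Adj σ τ} ⊆ Set.range extend := by
    rintro _ ⟨τ, hτ, rfl⟩
    obtain ⟨hiτ, rfl⟩ := (prefixGraph_adj_of_notMem hσ).mp hτ
    obtain ⟨r, hr⟩ := List.exists_eq_takeWhile_ne_append_cons hiτ
    have hnodup := τ.2
    rw [hr, List.nodup_append, List.nodup_cons] at hnodup
    lift r to List {x // x ≠ i} using fun x hx hxi => hnodup.2.1.1 (hxi ▸ hx)
    exact ⟨⟨r, hnodup.2.1.2.of_map _⟩, hr.symm⟩
  calc {τ | (prefixGraph i).Adj σ τ}.ncard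
      = (Subtype.val '' {τ | (prefixGraph i).Adj σ τ}).ncard :=
        (Set.ncard_image_of_injective _ Subtype.val_injective).symm
    _ ≤ (Set.range extend).ncard := Set.ncard_le_ncard hsub (Set.finite_range _)
    _ ≤ Nat.card (NodupList {x // x ≠ i}) := by
      rw [← Set.image_univ, ← Set.ncard_univ]
      exact Set.ncard_image_le Set.finite_univ

lemma ncard_neighborSet_prefixGraph_le [Fintype α] (i : α) (σ : NodupList α) :
    {τ | (prefixGraph i).Adj σ τ}.ncard ≤ 3 * (Fintype.card α - 1)! := by
  by_cases hσ : i ∈ σ.1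
  · rw [prefixGraph,
      ncard_neighborSet_starGraph_of_isLeaf (fun σ _ => notMem_prefixBefore i σ) hσ]
    have := (Fintype.card α - 1).factorial_pos
    omega
  · calc _ ≤ Nat.card (NodupList {x // x ≠ i}) := ncard_neighborSet_prefixGraph_le_of_notMem hσ
      _ ≤ 3 * (Fintype.card α - 1)! := by
        simpa using (card_nodupList_lt {x // x ≠ i}).le

lemma exists_length_eq_forall_prefixBefore_mem {R : α → Set (NodupList α)}
    (hR : ∀ i, ∀ u ∈ R i, ∀ v ∈ R i, ¬ (prefixGraph i).Adj u v) (hcover : ⋃ i, R i = Set.univ)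
    (n : ℕ) : ∃ σ : NodupList α, σ.1.length = n ∧ ∀ i ∈ σ.1, prefixBefore i σ ∈ R i := by
  induction n with
  | zero => exact ⟨⟨[], List.nodup_nil⟩, rfl, by simp⟩
  | succ n ih =>
    obtain ⟨σ, hlen, hσ⟩ := ih
    obtain ⟨m, hm⟩ := Set.mem_iUnion.mp (hcover ▸ Set.mem_univ σ)
    have hmσ : m ∉ σ.1 := fun hmσ => hR m σ hm _ (hσ m hmσ) (prefixGraph_adj_prefixBefore hmσ)
    refine ⟨⟨σ.1 ++ [m], σ.2.append (List.nodup_singleton m) (by simpa using hmσ)⟩,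
      by simp [hlen], fun i hi => ?_⟩
    rcases List.mem_append.mp hi with hi | hi
    · convert hσ i hi using 1
      exact Subtype.ext (List.takeWhile_ne_append_of_mem hi _)
    · obtain rfl := List.mem_singleton.mp hi
      convert hm
      exact Subtype.ext (List.takeWhile_ne_append_cons hmσ [])

theorem not_exists_cooperativeColoring_prefixGraph [Fintype α] :
    ¬ ∃ R : α → Set (NodupList α),
      (∀ i, ∀ u ∈ R i, ∀ v ∈ R i, ¬ (prefixGraph i).Adj u v) ∧ (⋃ i, R i) = Set.univ := by
  rintro ⟨R, hR, hcover⟩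
  obtain ⟨σ, hlen, -⟩ := exists_length_eq_forall_prefixBefore_mem hR hcover (Fintype.card α + 1)
  have := σ.2.length_le_card
  omega

end NodupList

theorem stmt3 : ∀ t : ℕ, 1 ≤ t →
    ∃ (V : Type) (_ : Fintype V) (G : Fin t → SimpleGraph V),
      (∀ i, IsStarForest (G i)) ∧
      (∀ i (v : V), Set.ncard {w | (G i).Adj v w} ≤ 3 * Nat.factorial (t - 1)) ∧
      ¬ ∃ R : Fin t → Set V,
        (∀ i, ∀ u ∈ R i, ∀ v ∈ R i, ¬ (G i).Adj u v) ∧ (⋃ i, R i) = Set.univ := by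
  intro t _
  refine ⟨NodupList (Fin t), inferInstance, NodupList.prefixGraph,
    NodupList.isStarForest_prefixGraph, fun i σ => ?_,
    NodupList.not_exists_cooperativeColoring_prefixGraph⟩
  simpa using NodupList.ncard_neighborSet_prefixGraph_le i σ
end

section
/- Let (H_1, φ_1), …, (H_{t+1}, φ_{t+1}) be vertex-disjoint edge-colored graphs with colors in {1,…,t+1}, such that for each i, every adapted coloring of (H_i, φ_i) with colors {1,…,t+1} colors some vertex of H_i with color i. Form (G, φ) by taking the disjoint union of the H_i, adding a new vertex v, and joining v to every vertex of H_i by an edge of color i for each i. Then (G, φ) admits no adapted coloring with colors {1,…,t+1}. -/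
/-- `σ` is an adapted coloring of the edge-colored graph `(G, φ)`: no edge has its color equal
to the colors of both of its endpoints. -/
def IsAdapted {V C : Type*} (G : SimpleGraph V) (φ : Sym2 V → C) (σ : V → C) : Prop :=
  ∀ u v : V, G.Adj u v → ¬ (φ s(u, v) = σ u ∧ σ u = σ v)

theorem stmt5 {t : ℕ} (V : Fin (t + 1) → Type*) (H : ∀ i, SimpleGraph (V i))
    (φ : ∀ i, Sym2 (V i) → Fin (t + 1))
    (hH : ∀ i (σ : V i → Fin (t + 1)), IsAdapted (H i) (φ i) σ → ∃ x, σ x = i)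
    (G : SimpleGraph (Option ((i : Fin (t + 1)) × V i)))
    (φG : Sym2 (Option ((i : Fin (t + 1)) × V i)) → Fin (t + 1))
    (hsame : ∀ (i : Fin (t + 1)) (x y : V i),
      G.Adj (some ⟨i, x⟩) (some ⟨i, y⟩) ↔ (H i).Adj x y)
    (hdiff : ∀ (i j : Fin (t + 1)) (x : V i) (y : V j), i ≠ j →
      ¬ G.Adj (some ⟨i, x⟩) (some ⟨j, y⟩))
    (hv : ∀ (i : Fin (t + 1)) (x : V i), G.Adj none (some ⟨i, x⟩))
    (hφsame : ∀ (i : Fin (t + 1)) (x y : V i), (H i).Adj x y →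
      φG s(some ⟨i, x⟩, some ⟨i, y⟩) = φ i s(x, y))
    (hφv : ∀ (i : Fin (t + 1)) (x : V i), φG s(none, some ⟨i, x⟩) = i) :
    ¬ ∃ σ, IsAdapted G φG σ := by
  rintro ⟨σ, hσ⟩
  set i := σ none with hi
  have hτ : IsAdapted (H i) (φ i) (fun x => σ (some ⟨i, x⟩)) := by
    intro x y hxy ⟨h1, h2⟩
    exact hσ (some ⟨i, x⟩) (some ⟨i, y⟩) ((hsame i x y).2 hxy)
      ⟨by rw [hφsame i x y hxy]; exact h1, h2⟩
  obtain ⟨x, hx⟩ := hH i _ hτ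
  exact hσ none (some ⟨i, x⟩) (hv i x) ⟨(hφv i x).trans hi, hi.symm.trans hx.symm⟩
end

section
/- Let G be a graph with no subgraph isomorphic to a q-ary tree of height h (q ≥ 2, h ≥ 2), let k = 2q^h, and let A be the set of vertices of G of degree less than k. Then the induced subgraph G − A contains no subgraph isomorphic to a q-ary tree of height h − 1. -/
/-- The vertices of the complete `q`-ary tree of height `h`: sequences of branching choices
of length at most `h` (the root is the empty sequence, depth = length). -/
def qaryVert (q h : ℕ) := {l : List (Fin q) // l.length ≤ h}

/-- The complete `q`-ary tree of height `h`: every vertex at depth less than `h` has exactly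
`q` children, obtained by prepending a branching choice. -/
def qaryTree (q h : ℕ) : SimpleGraph (qaryVert q h) :=
  SimpleGraph.fromRel (fun a b => ∃ i : Fin q, b.val = i :: a.val)

/-- `G` contains a subgraph isomorphic to the `q`-ary tree of height `h`. -/
def ContainsQaryTree {V : Type*} (G : SimpleGraph V) (q h : ℕ) : Prop :=
  ∃ f : qaryVert q h → V, Function.Injective f ∧
    ∀ a b, (qaryTree q h).Adj a b → G.Adj (f a) (f b)


/-! An embedding of the `q`-ary tree of height `h - 1` into `G - A` has fewer than `q ^ h`
vertices, each of degree at least `2 q ^ h` in `G`. So every one of the `q ^ h` would-be children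
of its leaves can choose among more than `q ^ h` neighbours of its parent outside the image, and
Hall's theorem makes these choices distinct: this yields a `q`-ary tree of height `h` in `G`. -/

open Finset Function SimpleGraph

def qaryVertEquivSigma (q n : ℕ) : qaryVert q n ≃ Σ j : Fin (n + 1), List.Vector (Fin q) j where
  toFun a := ⟨⟨a.1.length, Nat.lt_succ_of_le a.2⟩, ⟨a.1, rfl⟩⟩
  invFun s := ⟨s.2.1, s.2.2.trans_le (Nat.le_of_lt_succ s.1.2)⟩
  left_inv _ := rfl
  right_inv := by
    rintro ⟨⟨j, hj⟩, l, hl⟩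
    simp only at hl
    subst hl
    rfl

noncomputable instance (q n : ℕ) : Fintype (qaryVert q n) :=
  Fintype.ofEquiv _ (qaryVertEquivSigma q n).symm

theorem card_qaryVert (q n : ℕ) :
    Fintype.card (qaryVert q n) = ∑ j ∈ range (n + 1), q ^ j := by
  simp [Fintype.card_congr (qaryVertEquivSigma q n), Fin.sum_univ_eq_sum_range]

theorem card_qaryVert_lt {q : ℕ} (hq : 2 ≤ q) (n : ℕ) :
    Fintype.card (qaryVert q n) < q ^ (n + 1) :=
  card_qaryVert q n ▸ Nat.geomSum_lt hq fun _ => mem_range.1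

theorem qaryTree_adj_of_eq_cons {q h : ℕ} {a b : qaryVert q h} (i : Fin q)
    (hab : b.1 = i :: a.1) : (qaryTree q h).Adj a b := by
  refine (fromRel_adj _ _ _).2 ⟨fun e => ?_, Or.inl ⟨i, hab⟩⟩
  exact List.cons_ne_self i a.1 (hab ▸ congrArg Subtype.val e).symm

theorem containsQaryTree_iff {V : Type*} (G : SimpleGraph V) (q h : ℕ) :
    ContainsQaryTree G q h ↔ ∃ f : qaryVert q h → V, Injective f ∧
      ∀ a b (i : Fin q), b.1 = i :: a.1 → G.Adj (f a) (f b) := by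
  refine ⟨fun ⟨f, hf, hadj⟩ => ⟨f, hf, fun a b i hab => hadj a b (qaryTree_adj_of_eq_cons i hab)⟩,
    fun ⟨f, hf, hadj⟩ => ⟨f, hf, fun a b hab => ?_⟩⟩
  rcases ((fromRel_adj _ _ _).1 hab).2 with ⟨i, hab⟩ | ⟨i, hba⟩
  · exact hadj a b i hab
  · exact (hadj b a i hba).symm

/-- The leaves of the tree of height `n + 1` are encoded as the vectors of length `n + 1`. -/
def qaryParent {q n : ℕ} (l : List.Vector (Fin q) (n + 1)) : qaryVert q n :=
  ⟨l.1.tail, by simp [l.2]⟩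

theorem containsQaryTree_succ_of_extend {V : Type*} (G : SimpleGraph V) {q n : ℕ}
    (f : qaryVert q n → V) (c : List.Vector (Fin q) (n + 1) → V) (hf : Injective f)
    (hc : Injective c) (hfc : ∀ a l, f a ≠ c l)
    (hadj : ∀ a b (i : Fin q), b.1 = i :: a.1 → G.Adj (f a) (f b))
    (hcadj : ∀ l, G.Adj (f (qaryParent l)) (c l)) :
    ContainsQaryTree G q (n + 1) := by
  classical
  let inner (a : {a : qaryVert q (n + 1) // a.1.length ≤ n}) : V := f ⟨a.1.1, a.2⟩
  let leaf (a : {a : qaryVert q (n + 1) // ¬ a.1.length ≤ n}) : V :=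
    c ⟨a.1.1, by have := a.1.2; have := a.2; omega⟩
  let g (a : qaryVert q (n + 1)) : V :=
    if ha : a.1.length ≤ n then inner ⟨a, ha⟩ else leaf ⟨a, ha⟩
  refine (containsQaryTree_iff G q (n + 1)).2 ⟨g, ?_, fun a b i hab => ?_⟩
  · refine Injective.dite _ (f := inner) (f' := leaf) (fun a b e => ?_) (fun a b e => ?_)
      (hfc _ _)
    · exact Subtype.ext (Subtype.ext (congrArg Subtype.val (hf e) :))
    · exact Subtype.ext (Subtype.ext (congrArg Subtype.val (hc e) :))
  have ha : a.1.length ≤ n := by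
    have := b.2
    rw [hab, List.length_cons] at this
    omega
  by_cases hb : b.1.length ≤ n
  · simp only [g, dif_pos ha, dif_pos hb]
    exact hadj ⟨a.1, ha⟩ ⟨b.1, hb⟩ i hab
  · have hb' : b.1.length = n + 1 := by have := b.2; omega
    have hparent : qaryParent ⟨b.1, hb'⟩ = ⟨a.1, ha⟩ := Subtype.ext (by simp [qaryParent, hab])
    simp only [g, dif_pos ha, dif_neg hb]
    change G.Adj (f ⟨a.1, ha⟩) (c ⟨b.1, hb'⟩)
    exact hparent ▸ hcadj _

theorem exists_injective_forall_mem_of_card_le {ι α : Type*} [Fintype ι] [DecidableEq α]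
    (t : ι → Finset α) (ht : ∀ i, Fintype.card ι ≤ #(t i)) :
    ∃ c : ι → α, Injective c ∧ ∀ i, c i ∈ t i := by
  refine (all_card_le_biUnion_card_iff_exists_injective t).1 fun s => ?_
  obtain rfl | ⟨i, hi⟩ := s.eq_empty_or_nonempty
  · simp
  · calc #s ≤ Fintype.card ι := card_le_univ s
      _ ≤ #(t i) := ht i
      _ ≤ #(s.biUnion t) := card_le_card (subset_biUnion_of_mem t hi)

theorem exists_qary_extension_of_le_degree {V : Type*} [Fintype V] (G : SimpleGraph V)
    [DecidableRel G.Adj] {q n : ℕ} (f : qaryVert q n → V) (hf : Injective f)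
    (hdeg : ∀ a, Fintype.card (qaryVert q n) + q ^ (n + 1) ≤ G.degree (f a)) :
    ∃ c : List.Vector (Fin q) (n + 1) → V,
      Injective c ∧ (∀ a l, f a ≠ c l) ∧ ∀ l, G.Adj (f (qaryParent l)) (c l) := by
  classical
  obtain ⟨c, hc, hcN⟩ := exists_injective_forall_mem_of_card_le
    (fun l => G.neighborFinset (f (qaryParent l)) \ univ.image f) fun l => by
      have hsdiff := le_card_sdiff (univ.image f) (G.neighborFinset (f (qaryParent l)))
      rw [card_image_of_injective _ hf, card_univ, card_neighborFinset_eq_degree] at hsdiff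
      have := hdeg (qaryParent l)
      rw [card_vector, Fintype.card_fin]
      omega
  refine ⟨c, hc, fun a l e => (mem_sdiff.1 (hcN l)).2 (e ▸ mem_image_of_mem f (mem_univ a)),
    fun l => ?_⟩
  simpa using (mem_sdiff.1 (hcN l)).1

theorem SimpleGraph.ncard_neighborSet_eq_degree {V : Type*} (G : SimpleGraph V) (v : V)
    [Fintype (G.neighborSet v)] : (G.neighborSet v).ncard = G.degree v := by
  rw [Set.ncard_eq_toFinset_card', ← card_neighborFinset_eq_degree, neighborFinset]

theorem stmt10 {V : Type*} [Fintype V] (G : SimpleGraph V) (q h : ℕ)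
    (hq : 2 ≤ q) (hh : 2 ≤ h) (hG : ¬ ContainsQaryTree G q h) :
    ¬ ContainsQaryTree (G.induce {v : V | Set.ncard {w | G.Adj v w} < 2 * q ^ h}ᶜ)
      q (h - 1) := by
  classical
  obtain ⟨n, rfl⟩ : ∃ n, h = n + 1 := ⟨h - 1, by omega⟩
  rw [Nat.add_sub_cancel, containsQaryTree_iff]
  rintro ⟨f, hf, hadj⟩
  have hdeg : ∀ a, Fintype.card (qaryVert q n) + q ^ (n + 1) ≤ G.degree (f a).1 := fun a => by
    have hfa := (f a).2
    rw [Set.mem_compl_iff, Set.mem_ofPred_eq, not_lt, ← neighborSet,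
      ncard_neighborSet_eq_degree] at hfa
    have := card_qaryVert_lt hq n
    omega
  obtain ⟨c, hc, hfc, hcadj⟩ :=
    exists_qary_extension_of_le_degree G (Subtype.val ∘ f) (Subtype.val_injective.comp hf) hdeg
  exact hG (containsQaryTree_succ_of_extend G _ c (Subtype.val_injective.comp hf) hc hfc
    (fun a b i hab => hadj a b i hab) hcadj)
end

section
/- Let T be a q-ary tree of height h−1 that is a subgraph of a graph G, where every vertex of T has degree at least 2q^h in G. Then G contains a q-ary tree of height h as a subgraph. (Key inequality: 2q^h > (q^{h-1} − 1)q + |V(T)|, where |V(T)| = (q^h − 1)/(q − 1) ≤ 2q^{h-1} for q ≥ 2.) -/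
/-! Each vertex of the embedded tree has at least `2 q^h` neighbours, fewer than `q^h` of which
lie on the tree itself. Hence each of the `q^h` new leaves has at least `q^h` admissible images
among the neighbours of its parent, and Hall's theorem chooses them pairwise distinct. -/

open Finset

theorem exists_injective_mem_of_card_le {ι α : Type*} [Fintype ι] [DecidableEq α]
    (t : ι → Finset α) (ht : ∀ i, Fintype.card ι ≤ #(t i)) :
    ∃ g : ι → α, Function.Injective g ∧ ∀ i, g i ∈ t i := by
  refine (all_card_le_biUnion_card_iff_exists_injective t).mp fun s => ?_
  rcases s.eq_empty_or_nonempty with rfl | ⟨i, hi⟩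
  · simp
  · calc #s ≤ Fintype.card ι := s.card_le_univ
      _ ≤ #(t i) := ht i
      _ ≤ #(s.biUnion t) := card_le_card (subset_biUnion_of_mem t hi)

namespace qaryVert

def equivSigmaVector (q m : ℕ) : qaryVert q m ≃ Σ k : Fin (m + 1), List.Vector (Fin q) k where
  toFun l := ⟨⟨l.1.length, Nat.lt_succ_of_le l.2⟩, ⟨l.1, rfl⟩⟩
  invFun v := ⟨v.2.1, by have := v.1.2; have := v.2.2; omega⟩
  left_inv _ := rfl
  right_inv v := Sigma.subtype_ext (Fin.ext v.2.2) rfl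

instance (q m : ℕ) : Fintype (qaryVert q m) := Fintype.ofEquiv _ (equivSigmaVector q m).symm

theorem card_lt_pow {q : ℕ} (hq : 2 ≤ q) (m : ℕ) : Fintype.card (qaryVert q m) < q ^ (m + 1) := by
  rw [Fintype.card_congr (equivSigmaVector q m), Fintype.card_sigma]
  simp only [card_vector, Fintype.card_fin]
  rw [Fin.sum_univ_eq_sum_range (q ^ ·)]
  exact Nat.geomSum_lt hq fun k hk => mem_range.mp hk

def leafParent {q m : ℕ} (l : List.Vector (Fin q) (m + 1)) : qaryVert q m :=
  ⟨l.toList.tail, by simp⟩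

end qaryVert

section Extension

open qaryVert

variable {V : Type*} {q m : ℕ}

def extendLeaves (f : qaryVert q m → V) (g : List.Vector (Fin q) (m + 1) → V)
    (x : qaryVert q (m + 1)) : V :=
  if hx : x.1.length ≤ m then f ⟨x.1, hx⟩ else g ⟨x.1, by have := x.2; omega⟩

theorem extendLeaves_injective {f : qaryVert q m → V} {g : List.Vector (Fin q) (m + 1) → V}
    (hf : Function.Injective f) (hg : Function.Injective g) (hgf : ∀ l x, g l ≠ f x) :
    Function.Injective (extendLeaves f g) := by
  rintro ⟨x, hx⟩ ⟨y, hy⟩ hxy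
  unfold extendLeaves at hxy
  split_ifs at hxy with hx' hy' hy'
  · obtain rfl : x = y := congrArg Subtype.val (hf hxy)
    rfl
  · exact absurd hxy.symm (hgf _ _)
  · exact absurd hxy (hgf _ _)
  · obtain rfl : x = y := congrArg Subtype.val (hg hxy)
    rfl

theorem extendLeaves_adj {G : SimpleGraph V} {f : qaryVert q m → V}
    {g : List.Vector (Fin q) (m + 1) → V}
    (hsub : ∀ a b, (qaryTree q m).Adj a b → G.Adj (f a) (f b))
    (hadj : ∀ l, G.Adj (f (leafParent l)) (g l)) (a b : qaryVert q (m + 1))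
    (hab : (qaryTree q (m + 1)).Adj a b) :
    G.Adj (extendLeaves f g a) (extendLeaves f g b) := by
  suffices H : ∀ a b : qaryVert q (m + 1), (∃ i : Fin q, b.1 = i :: a.1) →
      G.Adj (extendLeaves f g a) (extendLeaves f g b) by
    obtain ⟨-, hab | hab⟩ := (SimpleGraph.fromRel_adj _ _ _).mp hab
    exacts [H a b hab, (H b a hab).symm]
  rintro ⟨a, ha⟩ ⟨b, hb⟩ ⟨i, rfl : b = i :: a⟩
  have ha' : a.length ≤ m := by simp only [List.length_cons] at hb; omega
  by_cases hb' : (i :: a).length ≤ m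
  · simp only [extendLeaves, dif_pos ha', dif_pos hb']
    refine hsub _ _ ((SimpleGraph.fromRel_adj _ _ _).mpr ⟨?_, Or.inl ⟨i, rfl⟩⟩)
    exact fun h => List.cons_ne_self i a (congrArg Subtype.val h).symm
  · simp only [extendLeaves, dif_pos ha', dif_neg hb']
    exact hadj ⟨i :: a, _⟩

theorem containsQaryTree_succ {G : SimpleGraph V} {f : qaryVert q m → V}
    (hf : Function.Injective f) (hsub : ∀ a b, (qaryTree q m).Adj a b → G.Adj (f a) (f b))
    {g : List.Vector (Fin q) (m + 1) → V} (hg : Function.Injective g)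
    (hgf : ∀ l x, g l ≠ f x) (hadj : ∀ l, G.Adj (f (leafParent l)) (g l)) :
    ContainsQaryTree G q (m + 1) :=
  ⟨extendLeaves f g, extendLeaves_injective hf hg hgf, extendLeaves_adj hsub hadj⟩

end Extension

theorem stmt12 {V : Type*} [Fintype V] (G : SimpleGraph V) (q h : ℕ)
    (hq : 2 ≤ q) (hh : 1 ≤ h)
    (f : qaryVert q (h - 1) → V) (hf : Function.Injective f)
    (hsub : ∀ a b, (qaryTree q (h - 1)).Adj a b → G.Adj (f a) (f b))
    (hdeg : ∀ a, 2 * q ^ h ≤ Set.ncard {w | G.Adj (f a) w}) :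
    ContainsQaryTree G q h := by
  classical
  obtain ⟨m, rfl⟩ : ∃ m, h = m + 1 := ⟨h - 1, by omega⟩
  set A := univ.image f
  have hA : #A < q ^ (m + 1) := by
    rw [card_image_of_injective _ hf]
    exact qaryVert.card_lt_pow hq m
  let t l := G.neighborFinset (f (qaryVert.leafParent l)) \ A
  have ht : ∀ l, Fintype.card (List.Vector (Fin q) (m + 1)) ≤ #(t l) := by
    intro l
    have hN : 2 * q ^ (m + 1) ≤ #(G.neighborFinset (f (qaryVert.leafParent l))) := by
      rw [← Set.ncard_coe_finset, SimpleGraph.coe_neighborFinset]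
      exact hdeg _
    have := le_card_sdiff A (G.neighborFinset (f (qaryVert.leafParent l)))
    rw [card_vector, Fintype.card_fin]
    change q ^ (m + 1) ≤ #(G.neighborFinset _ \ A)
    omega
  obtain ⟨g, hg, hgt⟩ := exists_injective_mem_of_card_le t ht
  refine containsQaryTree_succ hf hsub hg (fun l x hlx => ?_) fun l => ?_
  · exact (mem_sdiff.mp (hgt l)).2 (hlx ▸ mem_image_of_mem f (mem_univ x))
  · exact (G.mem_neighborFinset _ _).mp (mem_sdiff.mp (hgt l)).1
end

section
/- Let G be a graph with a vertex partition U_1,…,U_k such that the quotient graph Q = G/(U_1,…,U_k) is contained in the closure of a rooted forest F of height at most h−1 on {1,…,k}, with each |U_i| ≤ t. Let B be the union of the parts U_i corresponding to roots of F and A = V(G) \ B. Then: (a) every connected component of G[B] has at most t vertices, and (b) every vertex of A has at most t neighbors in B. -/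
/-- Let `G` have a vertex partition `U 0, …, U (k-1)` with parts of size at most `t`, and let
the quotient graph be contained in the closure of a rooted forest of height at most `h - 1`
on `Fin k`, encoded by a parent function `p` (roots are the fixed points, and iterating `p`
at most `h - 1` times reaches a root). Let `B` be the union of the root parts and
`A = V \ B`. Then every component of `G[B]` has at most `t` vertices, and every vertex of
`A` has at most `t` neighbors in `B`. -/
theorem stmt15 {V : Type*} [Fintype V] {k t h : ℕ} (G : SimpleGraph V) (U : Fin k → Set V)
    (hdisj : ∀ i j, i ≠ j → U i ∩ U j = ∅)
    (hcover : (⋃ i, U i) = Set.univ)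
    (hsize : ∀ i, (U i).ncard ≤ t)
    (p : Fin k → Fin k)
    (hheight : ∀ i, p (p^[h - 1] i) = p^[h - 1] i)
    (hclosure : ∀ i j, i ≠ j → (∃ u ∈ U i, ∃ v ∈ U j, G.Adj u v) →
      (∃ n, p^[n] j = i) ∨ (∃ n, p^[n] i = j))
    (B : Set V) (hB : B = ⋃ i ∈ {i : Fin k | p i = i}, U i) :
    (∀ x : ↥B, (((G.induce B).connectedComponentMk x).supp).ncard ≤ t) ∧
    (∀ a : V, a ∉ B → Set.ncard {b | b ∈ B ∧ G.Adj a b} ≤ t) := by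
  -- membership in B gives a root part
  have hmem : ∀ v ∈ B, ∃ i, p i = i ∧ v ∈ U i := by
    intro v hv
    rw [hB] at hv
    simp only [Set.mem_iUnion, Set.mem_setOf_eq] at hv
    obtain ⟨i, hi, hvi⟩ := hv
    exact ⟨i, hi, hvi⟩
  -- adjacent vertices in root parts lie in the same root part
  have hadj : ∀ u v : V, G.Adj u v → ∀ i j, p i = i → p j = j →
      u ∈ U i → v ∈ U j → i = j := by
    intro u v huv i j hi hj hui hvj
    by_contra hij
    rcases hclosure i j hij ⟨u, hui, v, hvj, huv⟩ with ⟨n, hn⟩ | ⟨n, hn⟩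
    · rw [Function.iterate_fixed hj] at hn; exact hij hn.symm
    · rw [Function.iterate_fixed hi] at hn; exact hij hn
  constructor
  · intro x
    obtain ⟨i, hi, hxi⟩ := hmem x x.2
    -- every vertex with a walk to x lies in U i
    have key : ∀ (y z : ↥B), (G.induce B).Walk y z → (z : V) ∈ U i → (y : V) ∈ U i := by
      intro y z w
      induction w with
      | nil => exact id
      | @cons a b c hab w ih =>
        intro hz
        have hbU : (b : V) ∈ U i := ih hz
        obtain ⟨ja, hja, haja⟩ := hmem a a.2
        have hGab : G.Adj (a : V) (b : V) := hab
        have : ja = i := hadj (a : V) (b : V) hGab ja i hja hi haja hbU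
        exact this ▸ haja
    have hsub : Subtype.val '' ((G.induce B).connectedComponentMk x).supp ⊆ U i := by
      rintro _ ⟨y, hy, rfl⟩
      rw [SimpleGraph.ConnectedComponent.mem_supp_iff] at hy
      have hr : (G.induce B).Reachable y x := SimpleGraph.ConnectedComponent.exact hy
      exact hr.elim fun w => key y x w hxi
    calc (((G.induce B).connectedComponentMk x).supp).ncard
        = (Subtype.val '' ((G.induce B).connectedComponentMk x).supp).ncard :=
          (Set.ncard_image_of_injective _ Subtype.val_injective).symm
      _ ≤ (U i).ncard := Set.ncard_le_ncard hsub (U i).toFinite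
      _ ≤ t := hsize i
  · intro a ha
    rcases Set.eq_empty_or_nonempty {b | b ∈ B ∧ G.Adj a b} with he | ⟨b0, hb0B, hb0adj⟩
    · simp [he]
    · obtain ⟨i, hai⟩ : ∃ i, a ∈ U i := by
        simpa [Set.mem_iUnion] using (hcover ▸ Set.mem_univ a : a ∈ ⋃ i, U i)
      have hiroot : p i ≠ i := fun hpi => ha (hB ▸ Set.mem_biUnion hpi hai)
      -- any neighbor in B lies in a root part which is an iterate of i
      have hiter : ∀ b ∈ {b | b ∈ B ∧ G.Adj a b}, ∀ j, p j = j → b ∈ U j →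
          ∃ n, p^[n] i = j := by
        rintro b ⟨hbB, hab⟩ j hj hbj
        have hij : i ≠ j := fun hij => hiroot (hij ▸ hj)
        rcases hclosure i j hij ⟨a, hai, b, hbj, hab⟩ with ⟨n, hn⟩ | hn
        · rw [Function.iterate_fixed hj] at hn; exact absurd hn.symm hij
        · exact hn
      have huniqroot : ∀ n m j j', p j = j → p j' = j' →
          p^[n] i = j → p^[m] i = j' → j = j' := by
        have aux : ∀ n m j j', n ≤ m → p j = j → p j' = j' →
            p^[n] i = j → p^[m] i = j' → j = j' := by
          intro n m j j' hnm hj hj' hn hm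
          have : p^[m] i = j := by
            rw [show m = (m - n) + n from (Nat.sub_add_cancel hnm).symm,
              Function.iterate_add_apply, hn, Function.iterate_fixed hj]
          rw [this] at hm; exact hm
        intro n m j j' hj hj' hn hm
        rcases le_total n m with hle | hle
        · exact aux n m j j' hle hj hj' hn hm
        · exact (aux m n j' j hle hj' hj hm hn).symm
      obtain ⟨j0, hj0, hb0j⟩ := hmem b0 hb0B
      obtain ⟨n0, hn0⟩ := hiter b0 ⟨hb0B, hb0adj⟩ j0 hj0 hb0j
      have hsub : {b | b ∈ B ∧ G.Adj a b} ⊆ U j0 := by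
        rintro b ⟨hbB, hab⟩
        obtain ⟨j, hj, hbj⟩ := hmem b hbB
        obtain ⟨n, hn⟩ := hiter b ⟨hbB, hab⟩ j hj hbj
        have : j = j0 := huniqroot n n0 j j0 hj hj0 hn hn0
        exact this ▸ hbj
      exact le_trans (Set.ncard_le_ncard hsub (U j0).toFinite) (hsize j0)
end

section
/- Let {G_1, …, G_k} be a family of graphs whose vertex sets are subsets of a universal vertex set V, such that each graph G_i is a disjoint union of components each having at most t vertices, and each vertex v ∈ V belongs to at least 2t of the graphs G_i. Then the family has a cooperative list coloring: there exist independent sets R_i of G_i with ∪ R_i = V. -/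
/-- If every graph `G i` (on vertex set `Vs i ⊆ V`) has all components of size at most `t`,
and every vertex of `V` belongs to at least `2t` of the vertex sets `Vs i`, then the family
admits a cooperative list coloring. -/
theorem stmt17 {V : Type*} [Fintype V] {k t : ℕ} (Vs : Fin k → Set V)
    (hcover : (⋃ i, Vs i) = Set.univ)
    (G : (i : Fin k) → SimpleGraph ↥(Vs i))
    (hcomp : ∀ (i : Fin k) (x : ↥(Vs i)), (((G i).connectedComponentMk x).supp).ncard ≤ t)
    (hmem : ∀ v : V, 2 * t ≤ Set.ncard {i : Fin k | v ∈ Vs i}) :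
    ∃ R : (i : Fin k) → Set ↥(Vs i),
      (∀ i, ∀ u ∈ R i, ∀ v ∈ R i, ¬ (G i).Adj u v) ∧
      ∀ v : V, ∃ (i : Fin k) (hv : v ∈ Vs i), (⟨v, hv⟩ : ↥(Vs i)) ∈ R i := by
  classical
  -- handle the degenerate case t = 0
  rcases Nat.eq_zero_or_pos t with ht0 | htpos
  · -- every Vs i is empty, hence V is empty
    have hempty : IsEmpty V := by
      constructor
      intro v
      have hv : v ∈ ⋃ i, Vs i := by rw [hcover]; trivial
      obtain ⟨_, ⟨i, rfl⟩, hvi⟩ := hv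
      have h1 := hcomp i ⟨v, hvi⟩
      rw [ht0, Nat.le_zero] at h1
      have h2 : (⟨v, hvi⟩ : ↥(Vs i)) ∈ ((G i).connectedComponentMk ⟨v, hvi⟩).supp :=
        rfl
      have : 0 < (((G i).connectedComponentMk ⟨v, hvi⟩).supp).ncard :=
        (Set.ncard_pos (Set.toFinite _)).mpr ⟨_, h2⟩
      omega
    exact ⟨fun _ => ∅, fun i u hu => hu.elim, fun v => hempty.elim v⟩
  -- slots: pairs (graph, component)
  set S := Σ i : Fin k, (G i).ConnectedComponent with hS
  -- for each vertex, its set of available slots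
  have hmemd : ∀ v : V, ∀ i ∈ Finset.univ.filter (fun i : Fin k => v ∈ Vs i), v ∈ Vs i := by
    intro v i hi
    exact (Finset.mem_filter.mp hi).2
  set slots : V → Finset S := fun v =>
    (Finset.univ.filter (fun i : Fin k => v ∈ Vs i)).attach.image
      (fun i => ⟨i.1, (G i.1).connectedComponentMk ⟨v, hmemd v i.1 i.2⟩⟩) with hslots
  -- key cardinality fact
  have hslots_card : ∀ v : V, 2 * t ≤ (slots v).card := by
    intro v
    have hinj : Function.Injective
        (fun i : {x // x ∈ Finset.univ.filter (fun i : Fin k => v ∈ Vs i)} =>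
          (⟨i.1, (G i.1).connectedComponentMk ⟨v, hmemd v i.1 i.2⟩⟩ : S)) := by
      intro a b hab
      have : a.1 = b.1 := congrArg Sigma.fst hab
      exact Subtype.ext this
    rw [hslots]
    rw [Finset.card_image_of_injective _ hinj, Finset.card_attach]
    have := hmem v
    have hn : Set.ncard {i : Fin k | v ∈ Vs i}
        = (Finset.univ.filter (fun i : Fin k => v ∈ Vs i)).card := by
      rw [Set.ncard_eq_toFinset_card']
      congr 1
      ext i
      simp
    omega
  -- membership in slots characterization
  have hslots_mem : ∀ (v : V) (a : S), a ∈ slots v ↔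
      ∃ hv : v ∈ Vs a.1, a.2 = (G a.1).connectedComponentMk ⟨v, hv⟩ := by
    intro v a
    rw [hslots]
    simp only [Finset.mem_image, Finset.mem_attach, true_and, Subtype.exists,
      Finset.mem_filter, Finset.mem_univ, true_and]
    constructor
    · rintro ⟨i, hi, rfl⟩
      exact ⟨hi, rfl⟩
    · rintro ⟨hv, hc⟩
      exact ⟨a.1, hv, Sigma.ext rfl (heq_of_eq hc.symm)⟩
  -- Hall's condition
  have hall : ∀ s : Finset V, s.card ≤ (s.biUnion slots).card := by
    intro s
    have h1 : 2 * t * s.card ≤ ∑ v ∈ s, (slots v).card := by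
      calc 2 * t * s.card = ∑ _v ∈ s, 2 * t := by rw [Finset.sum_const, smul_eq_mul]; ring
        _ ≤ ∑ v ∈ s, (slots v).card := Finset.sum_le_sum fun v _ => hslots_card v
    have h2 : ∑ v ∈ s, (slots v).card
        = ∑ a ∈ s.biUnion slots, (s.filter (fun v => a ∈ slots v)).card := by
      have step : ∀ v ∈ s, (slots v).card
          = ∑ a ∈ s.biUnion slots, if a ∈ slots v then 1 else 0 := by
        intro v hv
        rw [Finset.sum_ite_mem, Finset.inter_eq_right.mpr
          (Finset.subset_biUnion_of_mem slots hv), Finset.sum_const, smul_eq_mul, mul_one]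
      rw [Finset.sum_congr rfl step, Finset.sum_comm]
      exact Finset.sum_congr rfl fun a _ => (Finset.card_filter _ _).symm
    have h3 : ∀ a ∈ s.biUnion slots, (s.filter (fun v => a ∈ slots v)).card ≤ t := by
      rintro ⟨i, c⟩ _
      have hsupp : (c.supp).ncard ≤ t := by
        induction c using SimpleGraph.ConnectedComponent.ind with
        | _ x => exact hcomp i x
      -- the filtered set injects into c.supp
      have hsub : (s.filter (fun v => (⟨i, c⟩ : S) ∈ slots v))
          ⊆ (c.supp.toFinset).image Subtype.val := by
        intro v hv
        obtain ⟨hvs, hvslot⟩ := Finset.mem_filter.mp hv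
        obtain ⟨hv', hc⟩ := (hslots_mem v ⟨i, c⟩).mp hvslot
        rw [Finset.mem_image]
        refine ⟨⟨v, hv'⟩, ?_, rfl⟩
        rw [Set.mem_toFinset, SimpleGraph.ConnectedComponent.mem_supp_iff]
        exact hc.symm
      calc (s.filter (fun v => (⟨i, c⟩ : S) ∈ slots v)).card
          ≤ ((c.supp.toFinset).image Subtype.val).card := Finset.card_le_card hsub
        _ ≤ (c.supp.toFinset).card := Finset.card_image_le
        _ = (c.supp).ncard := (Set.ncard_eq_toFinset_card' _).symm
        _ ≤ t := hsupp
    have h4 : ∑ a ∈ s.biUnion slots, (s.filter (fun v => a ∈ slots v)).card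
        ≤ t * (s.biUnion slots).card := by
      calc ∑ a ∈ s.biUnion slots, (s.filter (fun v => a ∈ slots v)).card
          ≤ ∑ _a ∈ s.biUnion slots, t := Finset.sum_le_sum h3
        _ = t * (s.biUnion slots).card := by rw [Finset.sum_const]; ring
    have : 2 * t * s.card ≤ t * (s.biUnion slots).card := by omega
    nlinarith
  obtain ⟨f, hfinj, hf⟩ := (Finset.all_card_le_biUnion_card_iff_exists_injective slots).mp hall
  -- define the independent sets
  refine ⟨fun i => {x : ↥(Vs i) | f (x : V) = ⟨i, (G i).connectedComponentMk x⟩}, ?_, ?_⟩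
  · rintro i u hu v hv hadj
    have hcc : (G i).connectedComponentMk u = (G i).connectedComponentMk v :=
      SimpleGraph.ConnectedComponent.sound hadj.reachable
    have : f (u : V) = f (v : V) := by
      rw [hu, hv, hcc]
    have huv : (u : V) = (v : V) := hfinj this
    have : u = v := Subtype.ext huv
    subst this
    exact (G i).irrefl hadj
  · intro v
    have := hf v
    obtain ⟨hv, hc⟩ := (hslots_mem v (f v)).mp this
    refine ⟨(f v).1, hv, ?_⟩
    show f ((⟨v, hv⟩ : ↥(Vs (f v).1)) : V) = _
    exact Sigma.ext rfl (heq_of_eq hc)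
end
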